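/- arXiv:2108.09585 — 4 statements merged into one kernel-verified Lean document; each statement's English description precedes it below -/
import Mathlib

section
/- Extended Porteus theorem for SEP-POMDPs. Assume: (P(a)) Ṽ is as given (nonempty and closed under pointwise convergence); (P(b)) for every bounded v : S × B → ℝ such that v(·, b) ∈ Ṽ for every b ∈ B, also (Hv)(·, b) ∈ Ṽ for every b ∈ B; (P(c)) for every bounded v : S × B → ℝ such that v(·, b) ∈ Ṽ for every b ∈ B, and for every b ∈ B, there exists π_b ∈ Π̃ with (Hv)(s, b) = Σ_{y'} σ(y' | b) * h_{y'}(s, π_b s, v(·, λ(y', b))) for all s ∈ S. Then the unique bounded fixed point v* of H satisfies v*(·, b) ∈ Ṽ for every b ∈ B, and for every b ∈ B there exists π*_b ∈ Π̃ such that v*(s, b) = Σ_{y'} σ(y' | b) * h_{y'}(s, π*_b s, v*(·, λ(y', b))) for all s ∈ S. -/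
open Finset

/-- The belief simplex over the modulation space `M`. -/
abbrev Belief (M : Type) [Fintype M] : Type :=
  {b : M → ℝ // (∀ μ, 0 ≤ b μ) ∧ ∑ μ, b μ = 1}

/-- A finite SEP-POMDP: feasible action sets, cost function, state transition
probabilities, modulation/observation probabilities, and a discount factor. -/
structure SEP (S Y M A : Type) [Fintype S] [Fintype Y] [Fintype M] [Fintype A] where
  act : S → Finset A
  act_ne : ∀ s, (act s).Nonempty
  c : S → Y → A → ℝ
  p : Y → S → A → S → ℝ
  p_nonneg : ∀ y' s a s', 0 ≤ p y' s a s'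
  p_sum : ∀ y' s a, ∑ s', p y' s a s' = 1
  Q : M → Y → M → ℝ
  Q_nonneg : ∀ μ y' μ', 0 ≤ Q μ y' μ'
  Q_sum : ∀ μ, ∑ y', ∑ μ', Q μ y' μ' = 1
  β : ℝ
  β_nonneg : 0 ≤ β
  β_lt_one : β < 1

namespace SEP

variable {S Y M A : Type} [Fintype S] [Fintype Y] [Fintype M] [Fintype A]

/-- `σ(y' | b) = ∑ μ, ∑ μ', b μ * Q μ y' μ'`. -/
def sig (P : SEP S Y M A) (b : Belief M) (y' : Y) : ℝ :=
  ∑ μ, ∑ μ', b.1 μ * P.Q μ y' μ'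

/-- The Bayesian belief update `λ(y', b)`. -/
noncomputable def lam (P : SEP S Y M A) (y' : Y) (b : Belief M) : Belief M :=
  if h : 0 < P.sig b y' then
    ⟨fun μ' => (∑ μ, b.1 μ * P.Q μ y' μ') / P.sig b y',
      fun μ' => div_nonneg (Finset.sum_nonneg fun μ _ =>
        mul_nonneg (b.2.1 μ) (P.Q_nonneg μ y' μ')) h.le,
      by
        rw [← Finset.sum_div, Finset.sum_comm]
        exact div_self (ne_of_gt h)⟩
  else b

/-- `h_{y'}(s, a, v̄) = c s y' a + β * ∑ s', p y' s a s' * v̄ s'`. -/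
def hy (P : SEP S Y M A) (y' : Y) (s : S) (a : A) (vb : S → ℝ) : ℝ :=
  P.c s y' a + P.β * ∑ s', P.p y' s a s' * vb s'

/-- The Bellman operator `H` of the SEP-POMDP. -/
noncomputable def H (P : SEP S Y M A) (v : S → Belief M → ℝ) (s : S) (b : Belief M) : ℝ :=
  (P.act s).inf' (P.act_ne s) fun a =>
    ∑ y', P.sig b y' * P.hy y' s a fun s' => v s' (P.lam y' b)

/-- Boundedness of a function `v : S × B → ℝ`. -/
def Bdd (v : S → Belief M → ℝ) : Prop :=
  ∃ C, ∀ s b, |v s b| ≤ C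

end SEP

/-!
Starting from a constant function with values in `Vt`, P(b) keeps every Bellman iterate `Hⁿ v`
structured. Since `H` is a `β`-contraction for the sup distance, `Hⁿ v` converges to `v*`
uniformly, in particular pointwise, and closedness of `Vt` passes structure to the limit.
A structured optimal policy then comes from P(c) applied to `v*` itself, since `v* = H v*`.
-/

open Finset Filter Topology

lemma abs_sum_mul_le_of_sum_eq_one {ι : Type*} (t : Finset ι) {w f : ι → ℝ} {C : ℝ}
    (hw : ∀ i ∈ t, 0 ≤ w i) (hw_sum : ∑ i ∈ t, w i = 1) (hf : ∀ i ∈ t, |f i| ≤ C) :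
    |∑ i ∈ t, w i * f i| ≤ C :=
  calc |∑ i ∈ t, w i * f i| ≤ ∑ i ∈ t, |w i * f i| := abs_sum_le_sum_abs _ _
    _ ≤ ∑ i ∈ t, w i * C := sum_le_sum fun i hi => by
        rw [abs_mul, abs_of_nonneg (hw i hi)]
        exact mul_le_mul_of_nonneg_left (hf i hi) (hw i hi)
    _ = C := by rw [← sum_mul, hw_sum, one_mul]

lemma Finset.abs_inf'_sub_inf'_le {ι : Type*} (t : Finset ι) (ht : t.Nonempty) {f g : ι → ℝ}
    {ε : ℝ} (h : ∀ i ∈ t, |f i - g i| ≤ ε) : |t.inf' ht f - t.inf' ht g| ≤ ε := by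
  rw [abs_sub_le_iff]
  constructor
  · have : t.inf' ht f - ε ≤ t.inf' ht g := le_inf' ht _ fun i hi => by
      linarith [inf'_le f hi, (abs_sub_le_iff.mp (h i hi)).1]
    linarith
  · have : t.inf' ht g - ε ≤ t.inf' ht f := le_inf' ht _ fun i hi => by
      linarith [inf'_le g hi, (abs_sub_le_iff.mp (h i hi)).2]
    linarith

namespace SEP

variable {S Y M A : Type} [Fintype S] [Fintype Y] [Fintype M] [Fintype A] (P : SEP S Y M A)

lemma sig_nonneg (b : Belief M) (y' : Y) : 0 ≤ P.sig b y' :=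
  sum_nonneg fun μ _ => sum_nonneg fun μ' _ => mul_nonneg (b.2.1 μ) (P.Q_nonneg μ y' μ')

lemma sum_sig (b : Belief M) : ∑ y', P.sig b y' = 1 := by
  unfold sig
  rw [sum_comm]
  simp_rw [← mul_sum, P.Q_sum, mul_one]
  exact b.2.2

lemma abs_hy_sub_hy_le {v w : S → ℝ} {C : ℝ} (h : ∀ s', |v s' - w s'| ≤ C)
    (y' : Y) (s : S) (a : A) : |P.hy y' s a v - P.hy y' s a w| ≤ P.β * C := by
  have hsub : P.hy y' s a v - P.hy y' s a w = P.β * ∑ s', P.p y' s a s' * (v s' - w s') := by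
    simp only [hy, mul_sub, sum_sub_distrib]
    ring
  rw [hsub, abs_mul, abs_of_nonneg P.β_nonneg]
  exact mul_le_mul_of_nonneg_left (abs_sum_mul_le_of_sum_eq_one _
    (fun s' _ => P.p_nonneg y' s a s') (P.p_sum y' s a) fun s' _ => h s') P.β_nonneg

lemma abs_H_sub_H_le {v w : S → Belief M → ℝ} {C : ℝ} (h : ∀ s b, |v s b - w s b| ≤ C)
    (s : S) (b : Belief M) : |P.H v s b - P.H w s b| ≤ P.β * C := by
  refine abs_inf'_sub_inf'_le _ _ fun a _ => ?_
  rw [← sum_sub_distrib]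
  simp_rw [← mul_sub]
  exact abs_sum_mul_le_of_sum_eq_one _ (fun y' _ => P.sig_nonneg b y') (P.sum_sig b)
    fun y' _ => P.abs_hy_sub_hy_le (fun s' => h s' _) y' s a

lemma Bdd.H {v : S → Belief M → ℝ} (hv : Bdd v) : Bdd (P.H v) := by
  obtain ⟨C, hC⟩ := hv
  obtain ⟨K, hK⟩ := Finite.exists_le fun x : S × Y × A => |P.c x.1 x.2.1 x.2.2|
  refine ⟨K + P.β * C, fun s b => ?_⟩
  have hhy : ∀ y' a, |P.hy y' s a fun s' => v s' (P.lam y' b)| ≤ K + P.β * C := fun y' a => by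
    have hdev := P.abs_hy_sub_hy_le (w := 0) (fun s' => by simpa using hC s' (P.lam y' b)) y' s a
    have hc : P.hy y' s a 0 = P.c s y' a := by simp [hy]
    rw [hc] at hdev
    linarith [abs_sub_abs_le_abs_sub (P.hy y' s a fun s' => v s' (P.lam y' b)) (P.c s y' a),
      hK (s, y', a)]
  have hinf : |P.H v s b - (P.act s).inf' (P.act_ne s) fun _ => 0| ≤ K + P.β * C :=
    abs_inf'_sub_inf'_le _ _ fun a _ => by
      simpa only [sub_zero] using abs_sum_mul_le_of_sum_eq_one _
        (fun y' _ => P.sig_nonneg b y') (P.sum_sig b) fun y' _ => hhy y' a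
  rwa [inf'_const, sub_zero] at hinf

lemma Bdd.H_iterate {v : S → Belief M → ℝ} (hv : Bdd v) (n : ℕ) : Bdd (P.H^[n] v) := by
  induction n with
  | zero => exact hv
  | succ n ih => rw [Function.iterate_succ_apply']; exact ih.H P

lemma H_iterate_mem {Vt : Set (S → ℝ)}
    (hPb : ∀ v : S → Belief M → ℝ, Bdd v →
      (∀ b, (fun s => v s b) ∈ Vt) → ∀ b, (fun s => P.H v s b) ∈ Vt)
    {v : S → Belief M → ℝ} (hv : Bdd v) (hvV : ∀ b, (fun s => v s b) ∈ Vt) (n : ℕ) :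
    ∀ b, (fun s => P.H^[n] v s b) ∈ Vt := by
  induction n with
  | zero => exact hvV
  | succ n ih => rw [Function.iterate_succ_apply']; exact hPb _ (hv.H_iterate P n) ih

lemma abs_H_iterate_sub_le {u v : S → Belief M → ℝ} (hfix : ∀ s b, u s b = P.H u s b) {C : ℝ}
    (hC : ∀ s b, |v s b - u s b| ≤ C) (n : ℕ) (s : S) (b : Belief M) :
    |P.H^[n] v s b - u s b| ≤ P.β ^ n * C := by
  induction n generalizing s b with
  | zero => simpa using hC s b
  | succ n ih =>
    rw [Function.iterate_succ_apply', hfix s b, pow_succ', mul_assoc]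
    exact P.abs_H_sub_H_le ih s b

lemma tendsto_H_iterate {u v : S → Belief M → ℝ} (hv : Bdd v) (hu : Bdd u)
    (hfix : ∀ s b, u s b = P.H u s b) (b : Belief M) :
    Tendsto (fun n => fun s => P.H^[n] v s b) atTop (𝓝 fun s => u s b) := by
  obtain ⟨Cv, hCv⟩ := hv
  obtain ⟨Cu, hCu⟩ := hu
  have hC : ∀ s b, |v s b - u s b| ≤ Cv + Cu := fun s b =>
    (abs_sub _ _).trans (add_le_add (hCv s b) (hCu s b))
  have hgeom : Tendsto (fun n => P.β ^ n * (Cv + Cu)) atTop (𝓝 0) := by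
    simpa using (tendsto_pow_atTop_nhds_zero_of_lt_one P.β_nonneg P.β_lt_one).mul_const
      (Cv + Cu)
  refine tendsto_pi_nhds.mpr fun s => tendsto_iff_norm_sub_tendsto_zero.mpr ?_
  simp_rw [Real.norm_eq_abs]
  exact squeeze_zero (fun _ => abs_nonneg _) (fun n => P.abs_H_iterate_sub_le hfix hC n s b)
    hgeom

end SEP

theorem extended_porteus_general {S Y M A : Type} [Fintype S] [Fintype Y] [Fintype M] [Fintype A]
    (P : SEP S Y M A)
    (Vt : Set (S → ℝ)) (hVne : Vt.Nonempty) (hVclosed : IsClosed Vt)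
    (Pt : Set (S → A))
    -- P(b): structured value preservation
    (hPb : ∀ v : S → Belief M → ℝ, SEP.Bdd v →
      (∀ b, (fun s => v s b) ∈ Vt) → ∀ b, (fun s => P.H v s b) ∈ Vt)
    -- P(c): structured policy attainment
    (hPc : ∀ v : S → Belief M → ℝ, SEP.Bdd v →
      (∀ b, (fun s => v s b) ∈ Vt) → ∀ b : Belief M, ∃ π ∈ Pt, ∀ s,
        P.H v s b = ∑ y', P.sig b y' * P.hy y' s (π s) fun s' => v s' (P.lam y' b))
    -- the unique bounded fixed point of H
    (vstar : S → Belief M → ℝ) (hbdd : SEP.Bdd vstar)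
    (hfix : ∀ s b, vstar s b = P.H vstar s b) :
    (∀ b, (fun s => vstar s b) ∈ Vt) ∧
    ∀ b : Belief M, ∃ π ∈ Pt, ∀ s,
      vstar s b = ∑ y', P.sig b y' * P.hy y' s (π s) fun s' => vstar s' (P.lam y' b) := by
  obtain ⟨w, hw⟩ := hVne
  obtain ⟨K, hK⟩ := Finite.exists_le fun s => |w s|
  have hconst : SEP.Bdd fun s (_ : Belief M) => w s := ⟨K, fun s _ => hK s⟩
  have hmem : ∀ b, (fun s => vstar s b) ∈ Vt := fun b =>
    hVclosed.mem_of_tendsto (P.tendsto_H_iterate hconst hbdd hfix b)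
      (Eventually.of_forall fun n => P.H_iterate_mem hPb hconst (fun _ => hw) n b)
  refine ⟨hmem, fun b => ?_⟩
  obtain ⟨π, hπ, hπeq⟩ := hPc vstar hbdd hmem b
  exact ⟨π, hπ, fun s => (hfix s b).trans (hπeq s)⟩

/-- **Extended Porteus theorem for SEP-POMDPs.** Under P(a) (the structured set
`Vt` is nonempty and closed in the topology of pointwise convergence), P(b)
(structured value preservation) and P(c) (structured policy attainment), the
unique bounded fixed point `vstar` of the Bellman operator `H` is structured
in `s` for every belief, and for every belief there is a structured policy
attaining the minimum. -/
theorem extended_porteus {S Y M A : Type} [Fintype S] [Fintype Y] [Fintype M] [Fintype A]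
    [Nonempty S] [Nonempty Y] [Nonempty M] [Nonempty A]
    (P : SEP S Y M A)
    (Vt : Set (S → ℝ)) (hVne : Vt.Nonempty) (hVclosed : IsClosed Vt)
    (Pt : Set (S → A)) (hPt : ∀ π ∈ Pt, ∀ s, π s ∈ P.act s)
    -- P(b): structured value preservation
    (hPb : ∀ v : S → Belief M → ℝ, SEP.Bdd v →
      (∀ b, (fun s => v s b) ∈ Vt) → ∀ b, (fun s => P.H v s b) ∈ Vt)
    -- P(c): structured policy attainment
    (hPc : ∀ v : S → Belief M → ℝ, SEP.Bdd v →
      (∀ b, (fun s => v s b) ∈ Vt) → ∀ b : Belief M, ∃ π ∈ Pt, ∀ s,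
        P.H v s b = ∑ y', P.sig b y' * P.hy y' s (π s) fun s' => v s' (P.lam y' b))
    -- the unique bounded fixed point of H
    (vstar : S → Belief M → ℝ) (hbdd : SEP.Bdd vstar)
    (hfix : ∀ s b, vstar s b = P.H vstar s b) :
    (∀ b, (fun s => vstar s b) ∈ Vt) ∧
    ∀ b : Belief M, ∃ π ∈ Pt, ∀ s,
      vstar s b = ∑ y', P.sig b y' * P.hy y' s (π s) fun s' => vstar s' (P.lam y' b) :=
  extended_porteus_general P Vt hVne hVclosed Pt hPb hPc vstar hbdd hfix
end

section
/- Porteus theorem for the completely observed MDP analog. Fix y' ∈ Y. Assume: (P(a)) Ṽ is as given (nonempty and closed under pointwise convergence); (P_{y'}(b)) v̄ ∈ Ṽ implies H̄_{y'} v̄ ∈ Ṽ; (P_{y'}(c)) for every v̄ ∈ Ṽ there exists π̃ ∈ Π̃ with (H̄_{y'} v̄)(s) = h_{y'}(s, π̃ s, v̄) for all s ∈ S. Then the unique fixed point v*_{y'} of H̄_{y'} lies in Ṽ, and there exists π*_{y'} ∈ Π̃ such that v*_{y'}(s) = h_{y'}(s, π*_{y'} s, v*_{y'}) for all s ∈ S.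 -/
/-!
Each `v̄ ↦ h_{y'}(s, a, v̄)` is affine with a stochastic vector as linear part, hence
`β`-Lipschitz for the sup metric, and a finite infimum of `β`-Lipschitz maps is `β`-Lipschitz;
so `H̄_{y'}` is a `β`-contraction. On the finite product `S → ℝ` the sup metric induces the
topology of pointwise convergence, so `Ṽ` is complete, and Banach's theorem applied to the
restriction of `H̄_{y'}` to the invariant set `Ṽ` yields a fixed point in `Ṽ`, which must be
`v*_{y'}`. Applying P_{y'}(c) to `v*_{y'}` gives the policy.
-/

open Finset

/-- The MDP-analog operator `H̄_{y'}` for a fixed observation `y'`. -/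
noncomputable def SEP.Hbar {S Y M A : Type} [Fintype S] [Fintype Y] [Fintype M] [Fintype A]
    (P : SEP S Y M A) (y' : Y) (vb : S → ℝ) (s : S) : ℝ :=
  (P.act s).inf' (P.act_ne s) fun a => P.hy y' s a vb

open scoped NNReal

theorem LipschitzWith.finset_inf' {α ι : Type*} [PseudoEMetricSpace α] {K : ℝ≥0}
    {s : Finset ι} (hs : s.Nonempty) {f : ι → α → ℝ} (hf : ∀ i ∈ s, LipschitzWith K (f i)) :
    LipschitzWith K fun x => s.inf' hs fun i => f i x := by
  induction hs using Finset.Nonempty.cons_induction with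
  | singleton a => simpa using hf a (mem_singleton_self a)
  | cons a s ha hs ih =>
    simp only [mem_cons, forall_eq_or_imp] at hf
    simpa only [inf'_cons hs, max_self] using hf.1.min (ih hf.2)

theorem LipschitzWith.of_forall_eval {α ι : Type*} {β : ι → Type*} [PseudoEMetricSpace α]
    [Fintype ι] [∀ i, PseudoEMetricSpace (β i)] {K : ℝ≥0} {F : α → ∀ i, β i} (hF : ∀ i, LipschitzWith K fun x => F x i) :
    LipschitzWith K F :=
  fun x y => edist_pi_le_iff.2 fun i => hF i x y

theorem lipschitzWith_one_sum_mul {ι : Type*} [Fintype ι] {w : ι → ℝ} (hw₀ : ∀ i, 0 ≤ w i)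
    (hw₁ : ∑ i, w i = 1) : LipschitzWith 1 fun v : ι → ℝ => ∑ i, w i * v i := by
  refine LipschitzWith.of_dist_le_mul fun u v => ?_
  rw [NNReal.coe_one, one_mul, Real.dist_eq, ← sum_sub_distrib]
  calc |∑ i, (w i * u i - w i * v i)| ≤ ∑ i, |w i * u i - w i * v i| := abs_sum_le_sum_abs _ _
    _ ≤ ∑ i, w i * dist u v := by
      refine sum_le_sum fun i _ => ?_
      rw [← mul_sub, abs_mul, abs_of_nonneg (hw₀ i), ← Real.dist_eq]
      exact mul_le_mul_of_nonneg_left (dist_le_pi_dist u v i) (hw₀ i)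
    _ = dist u v := by rw [← sum_mul, hw₁, one_mul]

namespace SEP

variable {S Y M A : Type} [Fintype S] [Fintype Y] [Fintype M] [Fintype A]

def nnβ (P : SEP S Y M A) : ℝ≥0 := ⟨P.β, P.β_nonneg⟩

@[simp]
theorem coe_nnβ (P : SEP S Y M A) : (P.nnβ : ℝ) = P.β := rfl

theorem lipschitzWith_hy (P : SEP S Y M A) (y' : Y) (s : S) (a : A) :
    LipschitzWith P.nnβ (P.hy y' s a) := by
  have hE := (lipschitzWith_one_sum_mul (P.p_nonneg y' s a) (P.p_sum y' s a)).dist_le_mul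
  refine LipschitzWith.of_dist_le_mul fun u v => ?_
  rw [hy, hy, dist_add_left, Real.dist_eq, ← mul_sub, abs_mul, abs_of_nonneg P.β_nonneg,
    ← Real.dist_eq]
  simpa only [coe_nnβ, NNReal.coe_one, one_mul] using mul_le_mul_of_nonneg_left (hE u v) P.β_nonneg

theorem contractingWith_Hbar (P : SEP S Y M A) (y' : Y) : ContractingWith P.nnβ (P.Hbar y') :=
  ⟨P.β_lt_one, LipschitzWith.of_forall_eval fun s =>
    LipschitzWith.finset_inf' (P.act_ne s) fun a _ => P.lipschitzWith_hy y' s a⟩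

end SEP

theorem ContractingWith.mem_of_isFixedPt {α : Type*} [MetricSpace α] {K : ℝ≥0} {f : α → α}
    (hf : ContractingWith K f) {s : Set α} (hsc : IsComplete s) (hne : s.Nonempty)
    (hsf : Set.MapsTo f s s) {x : α} (hx : Function.IsFixedPt f x) : x ∈ s := by
  obtain ⟨x₀, hx₀⟩ := hne
  obtain ⟨y, hys, hy, -⟩ :=
    ContractingWith.exists_fixedPoint' hsc hsf (hf.restrict hsf) hx₀ (edist_ne_top _ _)
  exact hf.fixedPoint_unique' hx hy ▸ hys

theorem porteus_mdp_analog_general {S Y M A : Type} [Fintype S] [Fintype Y] [Fintype M] [Fintype A]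
    (P : SEP S Y M A) (y' : Y)
    (Vt : Set (S → ℝ)) (hVne : Vt.Nonempty) (hVclosed : IsClosed Vt)
    (Pt : Set (S → A))
    -- P_{y'}(b): structured value preservation
    (hPb : ∀ vb ∈ Vt, P.Hbar y' vb ∈ Vt)
    -- P_{y'}(c): structured policy attainment
    (hPc : ∀ vb ∈ Vt, ∃ π ∈ Pt, ∀ s, P.Hbar y' vb s = P.hy y' s (π s) vb)
    -- the unique fixed point of H̄_{y'}
    (vstar : S → ℝ) (hfix : ∀ s, vstar s = P.Hbar y' vstar s) :
    vstar ∈ Vt ∧ ∃ π ∈ Pt, ∀ s, vstar s = P.hy y' s (π s) vstar := by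
  have hvstar : vstar ∈ Vt :=
    (P.contractingWith_Hbar y').mem_of_isFixedPt hVclosed.isComplete hVne
      (fun vb hvb => hPb vb hvb) (funext fun s => (hfix s).symm)
  obtain ⟨π, hπ, hπs⟩ := hPc vstar hvstar
  exact ⟨hvstar, π, hπ, fun s => (hfix s).trans (hπs s)⟩

/-- **Porteus theorem for the completely observed MDP analog.** Under P(a),
P_{y'}(b) and P_{y'}(c), the unique fixed point `vstar` of `H̄_{y'}` is
structured and there is a structured optimal policy attaining it. -/
theorem porteus_mdp_analog {S Y M A : Type} [Fintype S] [Fintype Y] [Fintype M] [Fintype A]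
    [Nonempty S] [Nonempty Y] [Nonempty M] [Nonempty A]
    (P : SEP S Y M A) (y' : Y)
    (Vt : Set (S → ℝ)) (hVne : Vt.Nonempty) (hVclosed : IsClosed Vt)
    (Pt : Set (S → A)) (hPt : ∀ π ∈ Pt, ∀ s, π s ∈ P.act s)
    -- P_{y'}(b): structured value preservation
    (hPb : ∀ vb ∈ Vt, P.Hbar y' vb ∈ Vt)
    -- P_{y'}(c): structured policy attainment
    (hPc : ∀ vb ∈ Vt, ∃ π ∈ Pt, ∀ s, P.Hbar y' vb s = P.hy y' s (π s) vb)
    -- the unique fixed point of H̄_{y'}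
    (vstar : S → ℝ) (hfix : ∀ s, vstar s = P.Hbar y' vstar s) :
    vstar ∈ Vt ∧ ∃ π ∈ Pt, ∀ s, vstar s = P.hy y' s (π s) vstar :=
  porteus_mdp_analog_general P y' Vt hVne hVclosed Pt hPb hPc vstar hfix
end

section
/- Inheritance of monotone value functions under the Jiang–Powell conditions. In the finite-horizon SEP-POMDP with horizon T, coupled transition function f, stage costs (c_t) and terminal cost c_T, value functions (v_t) as defined in the context, assume: (JP1) for all s, s̃ ∈ S with s ⪯ s̃ and all a ∈ A, y' ∈ Y, w ∈ W, f s a y' w ⪯ f s̃ a y' w; (JP2) for all s, s̃ ∈ S with s ⪯ s̃, all t < T, all y' ∈ Y and a ∈ A, c_t s y' a ≥ c_t s̃ y' a, and c_T s ≥ c_T s̃. Then for every t ≤ T, every b ∈ B, and all s, s̃ ∈ S with s ⪯ s̃, one has v_t(s, b) ≥ v_t(s̃, b). -/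
open Finset

/-- `σ(y' | b) = ∑ μ, ∑ μ', b μ * Q μ y' μ'`. -/
def sigB {Y M : Type} [Fintype Y] [Fintype M] (Q : M → Y → M → ℝ)
    (b : Belief M) (y' : Y) : ℝ :=
  ∑ μ, ∑ μ', b.1 μ * Q μ y' μ'

/-- The Bayesian belief update `λ(y', b)`. -/
noncomputable def lamB {Y M : Type} [Fintype Y] [Fintype M] (Q : M → Y → M → ℝ)
    (hQ0 : ∀ μ y' μ', 0 ≤ Q μ y' μ') (y' : Y) (b : Belief M) : Belief M :=
  if h : 0 < sigB Q b y' then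
    ⟨fun μ' => (∑ μ, b.1 μ * Q μ y' μ') / sigB Q b y',
      fun μ' => div_nonneg (Finset.sum_nonneg fun μ _ =>
        mul_nonneg (b.2.1 μ) (hQ0 μ y' μ')) h.le,
      by
        rw [← Finset.sum_div, Finset.sum_comm]
        exact div_self (ne_of_gt h)⟩
  else b

theorem sigB_nonneg {Y M : Type} [Fintype Y] [Fintype M] {Q : M → Y → M → ℝ}
    (hQ0 : ∀ μ y' μ', 0 ≤ Q μ y' μ') (b : Belief M) (y' : Y) : 0 ≤ sigB Q b y' :=
  sum_nonneg fun μ _ => sum_nonneg fun μ' _ => mul_nonneg (b.2.1 μ) (hQ0 μ y' μ')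

/-- One step of the backward recursion, with the observation weights `p` and the
continuation values `V x y'` (next state `x`, observation `y'`) abstracted. -/
theorem inf'_expectedCost_antitone {S Y A W : Type} [Fintype Y] [Fintype A] [Nonempty A]
    [Fintype W] (le : S → S → Prop) {p : Y → ℝ} (hp : ∀ y', 0 ≤ p y') {q : W → ℝ}
    (hq : ∀ w, 0 ≤ q w) {f : S → A → Y → W → S}
    (hf : ∀ s sTil, le s sTil → ∀ a y' w, le (f s a y' w) (f sTil a y' w))
    {c : S → Y → A → ℝ} (hc : ∀ s sTil, le s sTil → ∀ y' a, c sTil y' a ≤ c s y' a)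
    {V : S → Y → ℝ} (hV : ∀ x xTil, le x xTil → ∀ y', V xTil y' ≤ V x y')
    {s sTil : S} (hle : le s sTil) :
    (univ.inf' univ_nonempty fun a : A =>
        ∑ y', p y' * (c sTil y' a + ∑ w, q w * V (f sTil a y' w) y')) ≤
      univ.inf' univ_nonempty fun a : A =>
        ∑ y', p y' * (c s y' a + ∑ w, q w * V (f s a y' w) y') := by
  refine inf'_mono_fun fun a _ => sum_le_sum fun y' _ => ?_
  gcongr with w
  · exact hp y'
  · exact hc s sTil hle y' a
  · exact hq w
  · exact hV _ _ (hf s sTil hle a y' w) y'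

theorem monotone_value_inheritance_general
    {S Y M A W : Type} [Fintype Y] [Fintype M] [Fintype A] [Fintype W]
    [Nonempty A]
    -- `le` is a preorder on S
    (le : S → S → Prop)
    -- modulation/observation probabilities
    (Q : M → Y → M → ℝ) (hQ0 : ∀ μ y' μ', 0 ≤ Q μ y' μ')
    -- noise distribution
    (q : W → ℝ) (hq0 : ∀ w, 0 ≤ q w)
    -- coupled state transition function
    (f : S → A → Y → W → S)
    -- horizon, stage costs, terminal cost
    (T : ℕ) (ct : ℕ → S → Y → A → ℝ) (cT : S → ℝ)
    -- the finite-horizon value functions, defined by backward recursion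
    (v : ℕ → S → Belief M → ℝ)
    (hvT : ∀ s b, v T s b = cT s)
    (hvrec : ∀ t, t < T → ∀ s (b : Belief M),
      v t s b = Finset.univ.inf' Finset.univ_nonempty fun a : A =>
        ∑ y', sigB Q b y' *
          (ct t s y' a + ∑ w, q w * v (t + 1) (f s a y' w) (lamB Q hQ0 y' b)))
    -- JP1: monotone transitions
    (hJP1 : ∀ s sTil, le s sTil → ∀ a y' w, le (f s a y' w) (f sTil a y' w))
    -- JP2: monotone stage and terminal costs
    (hJP2c : ∀ s sTil, le s sTil → ∀ t, t < T → ∀ y' a, ct t sTil y' a ≤ ct t s y' a)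
    (hJP2T : ∀ s sTil, le s sTil → cT sTil ≤ cT s) :
    ∀ t, t ≤ T → ∀ (b : Belief M) (s sTil : S), le s sTil → v t sTil b ≤ v t s b := by
  intro t ht
  induction ht using Nat.decreasingInduction with
  | self => intro b s sTil hle; simpa only [hvT] using hJP2T s sTil hle
  | of_succ t htT ih =>
    intro b s sTil hle
    rw [hvrec t htT, hvrec t htT]
    exact inf'_expectedCost_antitone le (sigB_nonneg hQ0 b) hq0 hJP1
      (fun s sTil h => hJP2c s sTil h t htT)
      (fun x xTil h y' => ih (lamB Q hQ0 y' b) x xTil h) hle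

/-- **Inheritance of monotone value functions under the Jiang–Powell
conditions.** In the finite-horizon SEP-POMDP with horizon `T`, coupled
transition function `f`, stage costs `ct`, terminal cost `cT`, and value
functions `v` defined by backward recursion, conditions JP1 (monotone
transitions) and JP2 (monotone costs) imply that `v t (·, b)` is
monotone (antitone in the preorder `le`) for every `t ≤ T` and belief `b`. -/
theorem monotone_value_inheritance
    {S Y M A W : Type} [Fintype S] [Fintype Y] [Fintype M] [Fintype A] [Fintype W]
    [Nonempty S] [Nonempty Y] [Nonempty M] [Nonempty A] [Nonempty W]
    -- `le` is a preorder on S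
    (le : S → S → Prop) (hrefl : ∀ s, le s s)
    (htrans : ∀ s₁ s₂ s₃, le s₁ s₂ → le s₂ s₃ → le s₁ s₃)
    -- modulation/observation probabilities
    (Q : M → Y → M → ℝ) (hQ0 : ∀ μ y' μ', 0 ≤ Q μ y' μ')
    (hQ1 : ∀ μ, ∑ y', ∑ μ', Q μ y' μ' = 1)
    -- noise distribution
    (q : W → ℝ) (hq0 : ∀ w, 0 ≤ q w) (hq1 : ∑ w, q w = 1)
    -- coupled state transition function
    (f : S → A → Y → W → S)
    -- horizon, stage costs, terminal cost
    (T : ℕ) (ct : ℕ → S → Y → A → ℝ) (cT : S → ℝ)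
    -- the finite-horizon value functions, defined by backward recursion
    (v : ℕ → S → Belief M → ℝ)
    (hvT : ∀ s b, v T s b = cT s)
    (hvrec : ∀ t, t < T → ∀ s (b : Belief M),
      v t s b = Finset.univ.inf' Finset.univ_nonempty fun a : A =>
        ∑ y', sigB Q b y' *
          (ct t s y' a + ∑ w, q w * v (t + 1) (f s a y' w) (lamB Q hQ0 y' b)))
    -- JP1: monotone transitions
    (hJP1 : ∀ s sTil, le s sTil → ∀ a y' w, le (f s a y' w) (f sTil a y' w))
    -- JP2: monotone stage and terminal costs
    (hJP2c : ∀ s sTil, le s sTil → ∀ t, t < T → ∀ y' a, ct t sTil y' a ≤ ct t s y' a)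
    (hJP2T : ∀ s sTil, le s sTil → cT sTil ≤ cT s) :
    ∀ t, t ≤ T → ∀ (b : Belief M) (s sTil : S), le s sTil → v t sTil b ≤ v t s b :=
  monotone_value_inheritance_general le Q hQ0 q hq0 f T ct cT v hvT hvrec hJP1 hJP2c hJP2T
end

section
/- Separability factorization of the joint transition under the SEP-POMDP conditioning assumptions. Define, for the separable joint kernel P s μ a (y', s', μ') = p y' s a s' * Q μ y' μ', the marginal φ(y', s' | s, b, a) = Σ_{μ, μ'} b μ * P s μ a (y', s', μ'). Then: (1) φ(y', s' | s, b, a) = p y' s a s' * σ(y' | b) for all y', s', s, a and b ∈ B; and (2) the posterior is independent of the state, next state, and action: whenever φ(y', s' | s, b, a) ≠ 0, for every μ' ∈ M one has (Σ_μ b μ * P s μ a (y', s', μ')) / φ(y', s' | s, b, a) = (Σ_μ b μ * Q μ y' μ') / σ(y' | b); in particular, for any two triples (s, a, s') and (s̄, ā, s̄') with φ(y', s' | s, b, a) ≠ 0 and φ(y', s̄' | s̄, b, ā) ≠ 0, the corresponding posteriors coincide. -/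
open Finset

/-- The separable joint transition kernel
`P[y', s', μ' | s, μ, a] = p y' s a s' * Q μ y' μ'`. -/
def jointP {S Y M A : Type} (p : Y → S → A → S → ℝ) (Q : M → Y → M → ℝ)
    (s : S) (μ : M) (a : A) (y' : Y) (s' : S) (μ' : M) : ℝ :=
  p y' s a s' * Q μ y' μ'

/-- The marginal `φ(y', s' | s, b, a) = ∑ μ, ∑ μ', b μ * P[y', s', μ' | s, μ, a]`. -/
def phi {S Y M A : Type} [Fintype M] (p : Y → S → A → S → ℝ) (Q : M → Y → M → ℝ)
    (y' : Y) (s' : S) (s : S) (b : M → ℝ) (a : A) : ℝ :=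
  ∑ μ, ∑ μ', b μ * jointP p Q s μ a y' s' μ'

/-- `σ(y' | b) = ∑ μ, ∑ μ', b μ * Q μ y' μ'`. -/
def sigP {Y M : Type} [Fintype M] (Q : M → Y → M → ℝ) (b : M → ℝ) (y' : Y) : ℝ :=
  ∑ μ, ∑ μ', b μ * Q μ y' μ'

/-!
Because the joint kernel is a product `p y' s a s' * Q μ y' μ'` whose first factor does not
depend on the modulations, `p y' s a s'` can be pulled out of every sum over `μ` and `μ'`.
It then cancels from the posterior, leaving the `Q`-posterior, which involves neither the
state, the next state nor the action.
-/

section SeparableKernel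

variable {S Y M A : Type} [Fintype M] (p : Y → S → A → S → ℝ) (Q : M → Y → M → ℝ)
  (b : M → ℝ) (y' : Y) (s' s : S) (a : A)

theorem sum_mul_jointP (μ' : M) :
    ∑ μ, b μ * jointP p Q s μ a y' s' μ' = p y' s a s' * ∑ μ, b μ * Q μ y' μ' := by
  rw [mul_sum]
  exact sum_congr rfl fun μ _ => by rw [jointP]; ring

theorem phi_eq_mul_sigP : phi p Q y' s' s b a = p y' s a s' * sigP Q b y' := by
  simp only [phi, sigP, mul_sum]
  exact sum_congr rfl fun μ _ => sum_congr rfl fun μ' _ => by rw [jointP]; ring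

theorem posterior_eq_of_phi_ne_zero (hφ : phi p Q y' s' s b a ≠ 0) (μ' : M) :
    (∑ μ, b μ * jointP p Q s μ a y' s' μ') / phi p Q y' s' s b a =
      (∑ μ, b μ * Q μ y' μ') / sigP Q b y' := by
  rw [phi_eq_mul_sigP] at hφ ⊢
  rw [sum_mul_jointP, mul_div_mul_left _ _ (left_ne_zero_of_mul hφ)]

end SeparableKernel

theorem separability_factorization_general
    {S Y M A : Type} [Fintype M]
    (p : Y → S → A → S → ℝ)
    (Q : M → Y → M → ℝ)
    (b : M → ℝ) :
    (∀ (y' : Y) (s' s : S) (a : A),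
      phi p Q y' s' s b a = p y' s a s' * sigP Q b y') ∧
    (∀ (y' : Y) (s' s : S) (a : A), phi p Q y' s' s b a ≠ 0 → ∀ μ' : M,
      (∑ μ, b μ * jointP p Q s μ a y' s' μ') / phi p Q y' s' s b a =
        (∑ μ, b μ * Q μ y' μ') / sigP Q b y') ∧
    (∀ (y' : Y) (s sBar s' sBar' : S) (a aBar : A),
      phi p Q y' s' s b a ≠ 0 → phi p Q y' sBar' sBar b aBar ≠ 0 → ∀ μ' : M,
      (∑ μ, b μ * jointP p Q s μ a y' s' μ') / phi p Q y' s' s b a =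
        (∑ μ, b μ * jointP p Q sBar μ aBar y' sBar' μ') / phi p Q y' sBar' sBar b aBar) := by
  refine ⟨phi_eq_mul_sigP p Q b, posterior_eq_of_phi_ne_zero p Q b, ?_⟩
  intro y' s sBar s' sBar' a aBar h h' μ'
  rw [posterior_eq_of_phi_ne_zero p Q b y' s' s a h μ',
    posterior_eq_of_phi_ne_zero p Q b y' sBar' sBar aBar h' μ']

/-- **Separability factorization under the SEP-POMDP conditioning
assumptions.** (1) The marginal factorizes as
`φ(y', s' | s, b, a) = p y' s a s' * σ(y' | b)`; (2) whenever
`φ(y', s' | s, b, a) ≠ 0`, the posterior belief is independent of `s`, `s'`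
and `a`; in particular (3) the posteriors for any two triples coincide. -/
theorem separability_factorization
    {S Y M A : Type} [Fintype S] [Fintype Y] [Fintype M] [Fintype A]
    [Nonempty S] [Nonempty Y] [Nonempty M] [Nonempty A]
    (p : Y → S → A → S → ℝ) (hp0 : ∀ y' s a s', 0 ≤ p y' s a s')
    (hp1 : ∀ y' s a, ∑ s', p y' s a s' = 1)
    (Q : M → Y → M → ℝ) (hQ0 : ∀ μ y' μ', 0 ≤ Q μ y' μ')
    (hQ1 : ∀ μ, ∑ y', ∑ μ', Q μ y' μ' = 1)
    (b : M → ℝ) (hb0 : ∀ μ, 0 ≤ b μ) (hb1 : ∑ μ, b μ = 1) :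
    (∀ (y' : Y) (s' s : S) (a : A),
      phi p Q y' s' s b a = p y' s a s' * sigP Q b y') ∧
    (∀ (y' : Y) (s' s : S) (a : A), phi p Q y' s' s b a ≠ 0 → ∀ μ' : M,
      (∑ μ, b μ * jointP p Q s μ a y' s' μ') / phi p Q y' s' s b a =
        (∑ μ, b μ * Q μ y' μ') / sigP Q b y') ∧
    (∀ (y' : Y) (s sBar s' sBar' : S) (a aBar : A),
      phi p Q y' s' s b a ≠ 0 → phi p Q y' sBar' sBar b aBar ≠ 0 → ∀ μ' : M,
      (∑ μ, b μ * jointP p Q s μ a y' s' μ') / phi p Q y' s' s b a =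
        (∑ μ, b μ * jointP p Q sBar μ aBar y' sBar' μ') / phi p Q y' sBar' sBar b aBar) :=
  separability_factorization_general p Q b
end
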